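/- Let N = 2, M = 1, ξ⁰_1 > ξ⁰_2, ξ̄(0) > 0, and set t₀ = 2 ln(ξ⁰_1 / ξ̄(0)). Let α be a control optimal for the final cost with trajectory ξ. Then T ≥ t₀ if and only if ξ_1(T) = ξ_2(T); and if T ≥ t₀, then α_1(t) + α_2(t) = 1 for almost every t ∈ [0,T] (so that ξ̄(t) = ξ̄(0) e^{−t/2}). Moreover, the control given by (α_1,α_2)(t) = (1,0) for t ∈ [0,t₀) and (α_1,α_2)(t) = (1/2,1/2) for t ∈ [t₀,T] is optimal. -/

import Mathlib

/-!
The mean `ξ̄` satisfies `ξ̄' = -(α₁ + α₂) ξ̄ / 2`, so `ξ̄(T) ≥ ξ̄(0) e^{-T/2}` with equality iff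
`α₁ + α₂ = 1` a.e.; as `ξ̄` stays positive, `ξ₁' ≥ -ξ₁` gives `ξ₁(T) ≥ ξ⁰₁ e^{-T}`. Minimising
`ξ₁² + ξ₂²` under these two constraints: for `T ≥ t₀` the second one is inactive and the minimiser
is the diagonal point `ξ₁ = ξ₂ = ξ̄(0) e^{-T/2}`; for `T < t₀` it lies off the diagonal, at
`ξ₁ = ξ⁰₁ e^{-T}`. The switching control reaches these minimisers, and its trajectory is unique
because it fixes `ξ̄`.

The state equations hold only in integral form, with measurable controls; the differential
inequalities are therefore run through the integrating factor `e^{rt}`, using absolute continuity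
of indefinite integrals.
-/

open MeasureTheory Real

noncomputable section

def IsAdmissible2 (T M : ℝ) (α : ℝ → ℕ → ℝ) : Prop :=
  (∀ i, Measurable fun t => α t i) ∧
  (∀ t ∈ Set.Icc (0 : ℝ) T, ∀ i ∈ Finset.Icc 1 2, 0 ≤ α t i ∧ α t i ≤ 1) ∧
  (∀ t ∈ Set.Icc (0 : ℝ) T, α t 1 + α t 2 ≤ M)

def xbar2 (ξ : ℝ → ℕ → ℝ) (s : ℝ) : ℝ := (ξ s 1 + ξ s 2) / 2

def IsTrajectory2 (T : ℝ) (α : ℝ → ℕ → ℝ) (ξ0 : ℕ → ℝ) (ξ : ℝ → ℕ → ℝ) : Prop :=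
  (∀ i, ContinuousOn (fun t => ξ t i) (Set.Icc 0 T)) ∧
  (∀ t ∈ Set.Icc (0 : ℝ) T, ∀ i ∈ Finset.Icc 1 2,
    ξ t i = ξ0 i + ∫ s in (0 : ℝ)..t, (-(ξ s i) + (1 - α s i) * xbar2 ξ s))

def migV2 (ξ : ℝ → ℕ → ℝ) (t : ℝ) : ℝ := ((ξ t 1) ^ 2 + (ξ t 2) ^ 2) / 2

def IsOptimalFinal2 (T M : ℝ) (ξ0 : ℕ → ℝ) (α ξ : ℝ → ℕ → ℝ) : Prop :=
  IsAdmissible2 T M α ∧ IsTrajectory2 T α ξ0 ξ ∧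
  ∀ β η, IsAdmissible2 T M β → IsTrajectory2 T β ξ0 η → migV2 ξ T ≤ migV2 η T

open Set

section LinearIntegralEquation

variable {f g : ℝ → ℝ} {r T : ℝ}

theorem exp_mul_eq_add_integral_of_eq_integral
    (hf : ContinuousOn f (Icc 0 T)) (hg : IntervalIntegrable g volume 0 T)
    (h : ∀ t ∈ Icc 0 T, f t = f 0 + ∫ s in 0..t, (-(r * f s) + g s))
    {t : ℝ} (ht : t ∈ Icc 0 T) :
    exp (r * t) * f t = f 0 + ∫ s in 0..t, exp (r * s) * g s := by
  have hsub : uIcc 0 t ⊆ Icc 0 T := by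
    rw [uIcc_of_le ht.1]; exact Icc_subset_Icc_right ht.2
  set k : ℝ → ℝ := fun s => -(r * f s) + g s
  have hk : IntervalIntegrable k volume 0 t :=
    (((hf.mono hsub).intervalIntegrable).const_mul r).neg.add
      (hg.mono_set (by rwa [uIcc_of_le (ht.1.trans ht.2)]))
  -- `f` is only known on `[0, T]`; `φ` is a globally defined, absolutely continuous
  -- replacement for `exp (r * ·) * f` there.
  set φ : ℝ → ℝ := fun x => exp (r * x) * (f 0 + ∫ s in 0..x, k s)
  have hφ : AbsolutelyContinuousOnInterval φ 0 t :=
    (ContDiffOn.absolutelyContinuousOnInterval (by fun_prop)).mul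
      ((ContDiffOn.absolutelyContinuousOnInterval contDiffOn_const).add
        (hk.absolutelyContinuousOnInterval_intervalIntegral (c := 0) left_mem_uIcc))
  have hderiv : ∀ᵐ s, s ∈ uIoc 0 t → deriv φ s = exp (r * s) * g s := by
    filter_upwards [hk.ae_hasDerivAt_integral] with s hs hst
    have hE : HasDerivAt (fun x => exp (r * x)) (exp (r * s) * r) s := by
      simpa using ((hasDerivAt_id s).const_mul r).exp
    have hφs : HasDerivAt φ
        (exp (r * s) * r * (f 0 + ∫ x in 0..s, k x) + exp (r * s) * k s) s :=
      hE.mul ((hs (uIoc_subset_uIcc hst) 0 left_mem_uIcc).const_add (f 0))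
    rw [hφs.deriv, ← h s (hsub (uIoc_subset_uIcc hst))]
    ring
  have hFTC := hφ.integral_deriv_eq_sub
  rw [intervalIntegral.integral_congr_ae hderiv] at hFTC
  simp only [φ, ← h t ht, intervalIntegral.integral_same, mul_zero, exp_zero, add_zero,
    one_mul] at hFTC
  linarith

theorem mul_exp_neg_le_of_eq_integral
    (hf : ContinuousOn f (Icc 0 T)) (hg : IntervalIntegrable g volume 0 T)
    (h : ∀ t ∈ Icc 0 T, f t = f 0 + ∫ s in 0..t, (-(r * f s) + g s))
    (hg₀ : ∀ᵐ s, s ∈ Icc 0 T → 0 ≤ g s) :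
    ∀ t ∈ Icc 0 T, f 0 * exp (-(r * t)) ≤ f t := by
  intro t ht
  have hint : 0 ≤ ∫ s in 0..t, exp (r * s) * g s := by
    refine intervalIntegral.integral_nonneg_of_ae_restrict ht.1 ?_
    filter_upwards [ae_restrict_mem measurableSet_Icc, ae_restrict_le hg₀] with s hs hgs
    exact mul_nonneg (exp_pos _).le (hgs ⟨hs.1, hs.2.trans ht.2⟩)
  rw [exp_neg, ← div_eq_mul_inv, div_le_iff₀ (exp_pos _)]
  linarith [exp_mul_eq_add_integral_of_eq_integral hf hg h ht]

theorem eq_mul_exp_neg_of_eq_integral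
    (hf : ContinuousOn f (Icc 0 T)) (hg : IntervalIntegrable g volume 0 T)
    (h : ∀ t ∈ Icc 0 T, f t = f 0 + ∫ s in 0..t, (-(r * f s) + g s))
    (hg₀ : ∀ᵐ s, s ∈ Icc 0 T → g s = 0) :
    ∀ t ∈ Icc 0 T, f t = f 0 * exp (-(r * t)) := by
  intro t ht
  have hint : ∫ s in 0..t, exp (r * s) * g s = 0 := by
    refine (intervalIntegral.integral_congr_ae (g := fun _ => (0 : ℝ)) ?_).trans
      intervalIntegral.integral_zero
    filter_upwards [hg₀] with s hs hst
    rw [uIoc_of_le ht.1] at hst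
    rw [hs ⟨hst.1.le, hst.2.trans ht.2⟩, mul_zero]
  rw [exp_neg, ← div_eq_mul_inv, eq_div_iff (exp_pos _).ne']
  linarith [exp_mul_eq_add_integral_of_eq_integral hf hg h ht]

end LinearIntegralEquation

theorem continuous_ite_lt {g h : ℝ → ℝ} {c : ℝ} (hg : Continuous g) (hh : Continuous h)
    (hc : g c = h c) : Continuous fun x => if x < c then g x else h x := by
  simpa only [← not_le, ite_not, id] using
    Continuous.if_le hh hg continuous_const continuous_id fun x hx => by
      rw [show x = c from hx.symm, hc]

theorem integral_ite_lt_eq_sub {g h g' h' : ℝ → ℝ} {a b c : ℝ} (hab : a ≤ b)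
    (hg : ∀ x, HasDerivAt g (g' x) x) (hh : ∀ x, HasDerivAt h (h' x) x)
    (hg' : Continuous g') (hh' : Continuous h') (hc : g c = h c) :
    ∫ x in a..b, (if x < c then g' x else h' x) =
      (if b < c then g b else h b) - (if a < c then g a else h a) := by
  refine intervalIntegral.integral_eq_sub_of_hasDeriv_right_of_le
    (f := fun x => if x < c then g x else h x) hab ?_ (fun x _ => ?_) ?_
  · exact (continuous_ite_lt (continuous_iff_continuousAt.2 fun x => (hg x).continuousAt)
      (continuous_iff_continuousAt.2 fun x => (hh x).continuousAt) hc).continuousOn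
  · rcases lt_or_ge x c with hx | hx
    · simp only [if_pos hx]
      exact ((hg x).congr_of_eventuallyEq
        (Filter.eventually_of_mem (Iio_mem_nhds hx) fun y hy => if_pos hy)).hasDerivWithinAt
    · simp only [if_neg hx.not_gt]
      exact (hh x).hasDerivWithinAt.congr (fun y hy => if_neg (hx.trans hy.out.le).not_gt)
        (if_neg hx.not_gt)
  · rw [intervalIntegrable_iff]
    exact (Integrable.piecewise (s := Iio c) measurableSet_Iio
      (hg'.intervalIntegrable a b).def'.integrableOn
      (hh'.intervalIntegrable a b).def'.integrableOn).congr
      (Filter.Eventually.of_forall fun x => by simp [Set.piecewise])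

theorem hasDerivAt_exp_neg (x : ℝ) : HasDerivAt (fun t => exp (-t)) (-exp (-x)) x :=
  (hasDerivAt_neg x).exp.congr_deriv (by ring)

theorem hasDerivAt_exp_neg_div_two (x : ℝ) :
    HasDerivAt (fun t => exp (-t / 2)) (-exp (-x / 2) / 2) x :=
  ((hasDerivAt_neg x).div_const 2).exp.congr_deriv (by ring)

theorem pos_of_eq_two_mul_log {a b t₀ : ℝ} (hb : 0 < b) (hba : b < a)
    (ht₀ : t₀ = 2 * log (a / b)) : 0 < t₀ := by
  rw [ht₀]
  linarith [log_pos ((one_lt_div hb).2 hba)]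

theorem mul_exp_neg_eq_of_eq_two_mul_log {a b t₀ : ℝ} (ha : 0 < a) (hb : 0 < b)
    (ht₀ : t₀ = 2 * log (a / b)) : a * exp (-t₀) = b * exp (-t₀ / 2) := by
  have hhalf : exp (-t₀ / 2) = b / a := by
    rw [ht₀, show -(2 * log (a / b)) / 2 = -log (a / b) by ring, exp_neg, exp_log (by positivity),
      inv_div]
  rw [show exp (-t₀) = exp (-t₀ / 2) * exp (-t₀ / 2) by rw [← exp_add]; ring_nf, hhalf]
  field_simp

theorem mul_exp_neg_lt_of_lt {a b t₀ T : ℝ} (hb : 0 < b)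
    (hmatch : a * exp (-t₀) = b * exp (-t₀ / 2)) (hT : T < t₀) :
    b * exp (-T / 2) < a * exp (-T) := by
  have h₁ : a * exp (-T) = b * exp (-t₀ / 2) * exp (t₀ - T) := by
    rw [← hmatch, mul_assoc, ← exp_add]; ring_nf
  have h₂ : b * exp (-T / 2) = b * exp (-t₀ / 2) * exp ((t₀ - T) / 2) := by
    rw [mul_assoc, ← exp_add]; ring_nf
  rw [h₁, h₂]
  gcongr
  linarith

section MigrationFunctional

variable {ξ : ℝ → ℕ → ℝ} {t m : ℝ}

theorem sq_le_migV2 (hm : 0 ≤ m) (h : m ≤ xbar2 ξ t) : m ^ 2 ≤ migV2 ξ t := by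
  unfold migV2
  unfold xbar2 at h
  nlinarith [sq_nonneg (ξ t 1 - ξ t 2)]

theorem eq_of_migV2_le (hm : 0 ≤ m) (h : m ≤ xbar2 ξ t) (hV : migV2 ξ t ≤ m ^ 2) :
    ξ t 1 = m ∧ ξ t 2 = m := by
  unfold migV2 at hV
  unfold xbar2 at h
  have : (ξ t 1 - m) ^ 2 + (ξ t 2 - m) ^ 2 ≤ 0 := by nlinarith
  constructor <;> nlinarith [sq_nonneg (ξ t 1 - m), sq_nonneg (ξ t 2 - m)]

theorem lt_migV2_of_eq {p : ℝ} (hm : 0 < m) (hmp : m < p) (hp : p ≤ ξ t 1)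
    (heq : ξ t 1 = ξ t 2) : (p ^ 2 + (2 * m - p) ^ 2) / 2 < migV2 ξ t := by
  unfold migV2
  rw [← heq]
  nlinarith

end MigrationFunctional

theorem IsAdmissible2.intervalIntegrable {T M : ℝ} {α : ℝ → ℕ → ℝ} {i : ℕ}
    (hα : IsAdmissible2 T M α) (hT : 0 ≤ T) (hi : i ∈ Finset.Icc 1 2) :
    IntervalIntegrable (fun t => α t i) volume 0 T := by
  rw [intervalIntegrable_iff_integrableOn_Ioc_of_le hT]
  refine Measure.integrableOn_of_bounded (M := 1) measure_Ioc_lt_top.ne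
    (hα.1 i).aestronglyMeasurable ?_
  filter_upwards [ae_restrict_mem measurableSet_Ioc] with t ht
  have := hα.2.1 t (Ioc_subset_Icc_self ht) i hi
  rw [Real.norm_eq_abs, abs_le]
  constructor <;> linarith

namespace IsTrajectory2

variable {T M : ℝ} {ξ0 : ℕ → ℝ} {α ξ η : ℝ → ℕ → ℝ} {i : ℕ}

theorem apply_zero (hξ : IsTrajectory2 T α ξ0 ξ) (hT : 0 ≤ T) (hi : i ∈ Finset.Icc 1 2) :
    ξ 0 i = ξ0 i := by
  simpa using hξ.2 0 ⟨le_rfl, hT⟩ i hi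

theorem xbar2_zero (hξ : IsTrajectory2 T α ξ0 ξ) (hT : 0 ≤ T) :
    xbar2 ξ 0 = (ξ0 1 + ξ0 2) / 2 := by
  rw [xbar2, hξ.apply_zero hT (by decide), hξ.apply_zero hT (i := 2) (by decide)]

theorem continuousOn_xbar2 (hξ : IsTrajectory2 T α ξ0 ξ) :
    ContinuousOn (xbar2 ξ) (Icc 0 T) :=
  ((hξ.1 1).add (hξ.1 2)).div_const 2

/-- The factor `1 *` puts the equation in the shape of the linear-equation lemmas, with `r = 1`. -/
theorem apply_eq_integral (hξ : IsTrajectory2 T α ξ0 ξ) (hT : 0 ≤ T) (hi : i ∈ Finset.Icc 1 2) :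
    ∀ t ∈ Icc 0 T, ξ t i = ξ 0 i + ∫ s in 0..t, (-(1 * ξ s i) + (1 - α s i) * xbar2 ξ s) := by
  intro t ht
  simpa [hξ.apply_zero hT hi] using hξ.2 t ht i hi

theorem intervalIntegrable_forcing (hξ : IsTrajectory2 T α ξ0 ξ) (hα : IsAdmissible2 T M α)
    (hT : 0 ≤ T) (hi : i ∈ Finset.Icc 1 2) :
    IntervalIntegrable (fun s => (1 - α s i) * xbar2 ξ s) volume 0 T :=
  (intervalIntegrable_const.sub (hα.intervalIntegrable hT hi)).mul_continuousOn
    (by rw [uIcc_of_le hT]; exact hξ.continuousOn_xbar2)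

theorem intervalIntegrable_xbar2_forcing (hξ : IsTrajectory2 T α ξ0 ξ)
    (hα : IsAdmissible2 T M α) (hT : 0 ≤ T) :
    IntervalIntegrable (fun s => (M - (α s 1 + α s 2)) / 2 * xbar2 ξ s) volume 0 T :=
  ((intervalIntegrable_const.sub ((hα.intervalIntegrable hT (by decide)).add
    (hα.intervalIntegrable hT (by decide)))).div_const 2).mul_continuousOn
    (by rw [uIcc_of_le hT]; exact hξ.continuousOn_xbar2)

/-- The decay rate `(α₁ + α₂) / 2` of the mean, split as `M / 2` minus a slack: the resulting
forcing is nonnegative as long as `ξ̄ ≥ 0`. -/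
theorem xbar2_eq_integral (hξ : IsTrajectory2 T α ξ0 ξ) (hα : IsAdmissible2 T M α)
    (hT : 0 ≤ T) :
    ∀ t ∈ Icc 0 T, xbar2 ξ t = xbar2 ξ 0 +
      ∫ s in 0..t, (-(M / 2 * xbar2 ξ s) + (M - (α s 1 + α s 2)) / 2 * xbar2 ξ s) := by
  intro t ht
  have hsub : uIcc 0 t ⊆ uIcc 0 T := uIcc_subset_uIcc_left (by rwa [uIcc_of_le hT])
  have hint : ∀ i ∈ Finset.Icc 1 2, IntervalIntegrable
      (fun s => -(ξ s i) + (1 - α s i) * xbar2 ξ s) volume 0 t := fun i hi =>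
    ((hξ.1 i).intervalIntegrable_of_Icc hT).neg.add (hξ.intervalIntegrable_forcing hα hT hi)
      |>.mono_set hsub
  calc xbar2 ξ t
      = xbar2 ξ 0 + ((∫ s in 0..t, (-(ξ s 1) + (1 - α s 1) * xbar2 ξ s))
          + ∫ s in 0..t, (-(ξ s 2) + (1 - α s 2) * xbar2 ξ s)) / 2 := by
        rw [xbar2, xbar2, hξ.2 t ht 1 (by decide), hξ.2 t ht 2 (by decide),
          hξ.apply_zero hT (by decide), hξ.apply_zero hT (i := 2) (by decide)]
        ring
    _ = _ := by
        rw [← intervalIntegral.integral_add (hint 1 (by decide)) (hint 2 (by decide)),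
          ← intervalIntegral.integral_div]
        congr 1
        refine intervalIntegral.integral_congr fun s _ => ?_
        simp only [xbar2]
        ring

theorem xbar2_pos (hξ : IsTrajectory2 T α ξ0 ξ) (hα : IsAdmissible2 T M α) (hT : 0 ≤ T)
    (h₀ : 0 < xbar2 ξ 0) : ∀ t ∈ Icc 0 T, 0 < xbar2 ξ t := by
  by_contra! hneg
  have hZ : IsCompact (Icc 0 T ∩ xbar2 ξ ⁻¹' Iic 0) :=
    isCompact_Icc.of_isClosed_subset
      (hξ.continuousOn_xbar2.preimage_isClosed_of_isClosed isClosed_Icc isClosed_Iic)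
      inter_subset_left
  obtain ⟨τ, ⟨hτ, hτ_neg⟩, hτ_min⟩ := hZ.exists_isLeast
    (by obtain ⟨t, ht, h⟩ := hneg; exact ⟨t, ht, h⟩)
  -- before its first zero `τ` the mean is positive, so the forcing is nonnegative on `[0, τ)`
  have hpos : ∀ s ∈ Ico 0 τ, 0 < xbar2 ξ s := fun s hs => by
    by_contra! h
    exact hs.2.not_ge (hτ_min ⟨⟨hs.1, hs.2.le.trans hτ.2⟩, h⟩)
  have hsub : Icc 0 τ ⊆ Icc 0 T := Icc_subset_Icc_right hτ.2
  have hlow := mul_exp_neg_le_of_eq_integral (hξ.continuousOn_xbar2.mono hsub)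
    ((hξ.intervalIntegrable_xbar2_forcing hα hT).mono_set
      (by rw [uIcc_of_le hτ.1, uIcc_of_le hT]; exact hsub))
    (fun t ht => hξ.xbar2_eq_integral hα hT t (hsub ht))
    (by
      filter_upwards [Measure.ae_ne volume τ] with s hsτ hs
      exact mul_nonneg (by linarith [hα.2.2 s (hsub hs)])
        (hpos s ⟨hs.1, lt_of_le_of_ne hs.2 hsτ⟩).le)
    τ ⟨hτ.1, le_rfl⟩
  have : 0 < xbar2 ξ 0 * exp (-(M / 2 * τ)) := by positivity
  linarith [show xbar2 ξ τ ≤ 0 from hτ_neg]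

theorem xbar2_forcing_nonneg (hξ : IsTrajectory2 T α ξ0 ξ) (hα : IsAdmissible2 T M α)
    (hT : 0 ≤ T) (h₀ : 0 < xbar2 ξ 0) :
    ∀ s ∈ Icc 0 T, 0 ≤ (M - (α s 1 + α s 2)) / 2 * xbar2 ξ s := fun s hs =>
  mul_nonneg (by linarith [hα.2.2 s hs]) (hξ.xbar2_pos hα hT h₀ s hs).le

theorem mul_exp_le_xbar2 (hξ : IsTrajectory2 T α ξ0 ξ) (hα : IsAdmissible2 T M α)
    (hT : 0 ≤ T) (h₀ : 0 < (ξ0 1 + ξ0 2) / 2) :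
    ∀ t ∈ Icc 0 T, (ξ0 1 + ξ0 2) / 2 * exp (-(M / 2 * t)) ≤ xbar2 ξ t := by
  rw [← hξ.xbar2_zero hT] at h₀ ⊢
  exact mul_exp_neg_le_of_eq_integral hξ.continuousOn_xbar2
    (hξ.intervalIntegrable_xbar2_forcing hα hT) (hξ.xbar2_eq_integral hα hT)
    (Filter.Eventually.of_forall (hξ.xbar2_forcing_nonneg hα hT h₀))

theorem xbar2_eq_of_ae_sum_eq (hξ : IsTrajectory2 T α ξ0 ξ) (hα : IsAdmissible2 T M α)
    (hT : 0 ≤ T) (hsum : ∀ᵐ t, t ∈ Icc 0 T → α t 1 + α t 2 = M) :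
    ∀ t ∈ Icc 0 T, xbar2 ξ t = (ξ0 1 + ξ0 2) / 2 * exp (-(M / 2 * t)) := by
  rw [← hξ.xbar2_zero hT]
  exact eq_mul_exp_neg_of_eq_integral hξ.continuousOn_xbar2
    (hξ.intervalIntegrable_xbar2_forcing hα hT) (hξ.xbar2_eq_integral hα hT)
    (by filter_upwards [hsum] with s hs hsT; rw [hs hsT, sub_self, zero_div, zero_mul])

theorem ae_sum_eq_of_xbar2_eq (hξ : IsTrajectory2 T α ξ0 ξ) (hα : IsAdmissible2 T M α)
    (hT : 0 ≤ T) (h₀ : 0 < (ξ0 1 + ξ0 2) / 2)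
    (hTeq : xbar2 ξ T = (ξ0 1 + ξ0 2) / 2 * exp (-(M / 2 * T))) :
    ∀ᵐ t, t ∈ Icc 0 T → α t 1 + α t 2 = M := by
  rw [← hξ.xbar2_zero hT] at h₀ hTeq
  set g : ℝ → ℝ := fun s => exp (M / 2 * s) * ((M - (α s 1 + α s 2)) / 2 * xbar2 ξ s)
  have hint : ∫ s in 0..T, g s = 0 := by
    have := exp_mul_eq_add_integral_of_eq_integral hξ.continuousOn_xbar2
      (hξ.intervalIntegrable_xbar2_forcing hα hT) (hξ.xbar2_eq_integral hα hT) ⟨hT, le_rfl⟩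
    rw [hTeq, mul_left_comm, ← exp_add, add_neg_cancel, exp_zero, mul_one] at this
    linarith
  have hae := (intervalIntegral.integral_eq_zero_iff_of_le_of_nonneg_ae hT
    ((ae_restrict_iff' measurableSet_Ioc).2 (Filter.Eventually.of_forall fun s hs =>
      mul_nonneg (exp_pos _).le
        (hξ.xbar2_forcing_nonneg hα hT h₀ s (Ioc_subset_Icc_self hs))))
    ((hξ.intervalIntegrable_xbar2_forcing hα hT).continuousOn_mul (by fun_prop))).1 hint
  filter_upwards [(ae_restrict_iff' measurableSet_Ioc).1 hae, Measure.ae_ne volume 0]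
    with t hgt ht₀ ht
  have hgt := hgt ⟨lt_of_le_of_ne ht.1 ht₀.symm, ht.2⟩
  have hx := hξ.xbar2_pos hα hT h₀ t ht
  simp only [Pi.zero_apply, mul_eq_zero, (exp_pos _).ne', hx.ne', false_or, or_false] at hgt
  linarith

theorem mul_exp_le_fst (hξ : IsTrajectory2 T α ξ0 ξ) (hα : IsAdmissible2 T M α) (hT : 0 ≤ T)
    (h₀ : 0 < (ξ0 1 + ξ0 2) / 2) : ∀ t ∈ Icc 0 T, ξ0 1 * exp (-t) ≤ ξ t 1 := by
  rw [← hξ.xbar2_zero hT] at h₀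
  rw [← hξ.apply_zero hT (by decide)]
  simpa only [one_mul] using mul_exp_neg_le_of_eq_integral (hξ.1 1)
    (hξ.intervalIntegrable_forcing hα hT (by decide)) (hξ.apply_eq_integral hT (by decide))
    (Filter.Eventually.of_forall fun s hs =>
      mul_nonneg (by linarith [(hα.2.1 s hs 1 (by decide)).2]) (hξ.xbar2_pos hα hT h₀ s hs).le)

theorem eq_of_ae_sum_eq (hξ : IsTrajectory2 T α ξ0 ξ) (hη : IsTrajectory2 T α ξ0 η)
    (hα : IsAdmissible2 T M α) (hT : 0 ≤ T) (hsum : ∀ᵐ t, t ∈ Icc 0 T → α t 1 + α t 2 = M) :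
    ∀ t ∈ Icc 0 T, ξ t 1 = η t 1 ∧ ξ t 2 = η t 2 := by
  have hxbar : ∀ t ∈ Icc 0 T, xbar2 ξ t = xbar2 η t := fun t ht => by
    rw [hξ.xbar2_eq_of_ae_sum_eq hα hT hsum t ht, hη.xbar2_eq_of_ae_sum_eq hα hT hsum t ht]
  have hfst : ∀ t ∈ Icc 0 T, ξ t 1 = η t 1 := fun t ht => by
    have hξ₁ := exp_mul_eq_add_integral_of_eq_integral (hξ.1 1)
      (hξ.intervalIntegrable_forcing hα hT (by decide)) (hξ.apply_eq_integral hT (by decide)) ht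
    have hη₁ := exp_mul_eq_add_integral_of_eq_integral (hη.1 1)
      (hη.intervalIntegrable_forcing hα hT (by decide)) (hη.apply_eq_integral hT (by decide)) ht
    rw [intervalIntegral.integral_congr fun s hs => by
      rw [hxbar s (Icc_subset_Icc_right ht.2 (by rwa [uIcc_of_le ht.1] at hs))],
      hξ.apply_zero hT (by decide), ← hη.apply_zero hT (by decide), ← hη₁] at hξ₁
    exact mul_left_cancel₀ (exp_pos _).ne' hξ₁
  refine fun t ht => ⟨hfst t ht, ?_⟩
  have := hxbar t ht
  rw [xbar2, xbar2, hfst t ht] at this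
  linarith

end IsTrajectory2

def switchControl (t₀ : ℝ) : ℝ → ℕ → ℝ := fun t i =>
  if i = 1 then (if t < t₀ then (1 : ℝ) else 1 / 2)
  else if i = 2 then (if t < t₀ then (0 : ℝ) else 1 / 2) else 0

/-- Under `(1, 0)` the first agent decays like `e^{-t}` and the mean like `e^{-t/2}`; from `t₀`
on, when the first agent has come down to the mean, both agents stay at the mean. -/
def switchTrajectory (ξ0 : ℕ → ℝ) (t₀ : ℝ) : ℝ → ℕ → ℝ := fun t i =>
  if i = 1 then
    (if t < t₀ then ξ0 1 * exp (-t) else (ξ0 1 + ξ0 2) / 2 * exp (-t / 2))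
  else if i = 2 then
    (if t < t₀ then (ξ0 1 + ξ0 2) * exp (-t / 2) - ξ0 1 * exp (-t)
      else (ξ0 1 + ξ0 2) / 2 * exp (-t / 2))
  else 0

theorem switchControl_add (t₀ t : ℝ) : switchControl t₀ t 1 + switchControl t₀ t 2 = 1 := by
  by_cases h : t < t₀ <;> norm_num [switchControl, h]

theorem isAdmissible2_switchControl (T t₀ : ℝ) : IsAdmissible2 T 1 (switchControl t₀) := by
  refine ⟨fun i => ?_, fun t _ i hi => ?_, fun t _ => (switchControl_add t₀ t).le⟩
  · unfold switchControl
    split_ifs <;> first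
      | exact Measurable.ite measurableSet_Iio measurable_const measurable_const
      | exact measurable_const
  · rcases Finset.mem_Icc.1 hi with ⟨h1, h2⟩
    interval_cases i <;> by_cases h : t < t₀ <;> norm_num [switchControl, h]

theorem xbar2_switchTrajectory (ξ0 : ℕ → ℝ) (t₀ t : ℝ) :
    xbar2 (switchTrajectory ξ0 t₀) t = (ξ0 1 + ξ0 2) / 2 * exp (-t / 2) := by
  simp only [xbar2, switchTrajectory, if_neg (by decide : (2 : ℕ) ≠ 1)]
  split_ifs <;> ring

theorem isTrajectory2_switchTrajectory (T : ℝ) {ξ0 : ℕ → ℝ} {t₀ : ℝ} (ht₀ : 0 < t₀)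
    (hmatch : ξ0 1 * exp (-t₀) = (ξ0 1 + ξ0 2) / 2 * exp (-t₀ / 2)) :
    IsTrajectory2 T (switchControl t₀) ξ0 (switchTrajectory ξ0 t₀) := by
  have hmatch₂ : (ξ0 1 + ξ0 2) * exp (-t₀ / 2) - ξ0 1 * exp (-t₀) =
      (ξ0 1 + ξ0 2) / 2 * exp (-t₀ / 2) := by linear_combination -hmatch
  refine ⟨fun i => ?_, fun t ht i hi => ?_⟩
  · unfold switchTrajectory
    split_ifs
    · exact (continuous_ite_lt (by fun_prop) (by fun_prop) hmatch).continuousOn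
    · exact (continuous_ite_lt (by fun_prop) (by fun_prop) hmatch₂).continuousOn
    · exact continuousOn_const
  rcases Finset.mem_Icc.1 hi with ⟨hi₁, hi₂⟩
  interval_cases i
  · rw [intervalIntegral.integral_congr (g := fun s => if s < t₀ then ξ0 1 * -exp (-s)
        else (ξ0 1 + ξ0 2) / 2 * (-exp (-s / 2) / 2)) fun s _ => ?_,
      integral_ite_lt_eq_sub ht.1 (fun x => (hasDerivAt_exp_neg x).const_mul _)
        (fun x => (hasDerivAt_exp_neg_div_two x).const_mul _) (by fun_prop) (by fun_prop)
        hmatch]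
    · simp [switchTrajectory, ht₀]
    · simp only [switchTrajectory, switchControl, xbar2_switchTrajectory]
      split_ifs <;> ring
  · rw [intervalIntegral.integral_congr (g := fun s =>
        if s < t₀ then (ξ0 1 + ξ0 2) * (-exp (-s / 2) / 2) - ξ0 1 * -exp (-s)
        else (ξ0 1 + ξ0 2) / 2 * (-exp (-s / 2) / 2)) fun s _ => ?_,
      integral_ite_lt_eq_sub (g := fun s => (ξ0 1 + ξ0 2) * exp (-s / 2) - ξ0 1 * exp (-s))
        ht.1 (fun x => ((hasDerivAt_exp_neg_div_two x).const_mul _).sub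
          ((hasDerivAt_exp_neg x).const_mul _))
        (fun x => (hasDerivAt_exp_neg_div_two x).const_mul _) (by fun_prop) (by fun_prop)
        hmatch₂]
    · simp [switchTrajectory, ht₀]
    · simp only [switchTrajectory, switchControl, xbar2_switchTrajectory,
        if_neg (by decide : (2 : ℕ) ≠ 1)]
      split_ifs <;> ring

theorem migV2_switchTrajectory_of_le {ξ0 : ℕ → ℝ} {t₀ t : ℝ} (h : t₀ ≤ t) :
    migV2 (switchTrajectory ξ0 t₀) t = ((ξ0 1 + ξ0 2) / 2 * exp (-t / 2)) ^ 2 := by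
  simp only [migV2, switchTrajectory, if_neg h.not_gt]
  norm_num

theorem migV2_switchTrajectory_of_lt {ξ0 : ℕ → ℝ} {t₀ t : ℝ} (h : t < t₀) :
    migV2 (switchTrajectory ξ0 t₀) t = ((ξ0 1 * exp (-t)) ^ 2 +
      (2 * ((ξ0 1 + ξ0 2) / 2 * exp (-t / 2)) - ξ0 1 * exp (-t)) ^ 2) / 2 := by
  simp only [migV2, switchTrajectory, if_pos h]
  norm_num
  ring

theorem isOptimalFinal2_switchControl {T t₀ : ℝ} {ξ0 : ℕ → ℝ} {η : ℝ → ℕ → ℝ} (hT : 0 ≤ T)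
    (hbar : 0 < (ξ0 1 + ξ0 2) / 2) (ht₀ : 0 < t₀)
    (hmatch : ξ0 1 * exp (-t₀) = (ξ0 1 + ξ0 2) / 2 * exp (-t₀ / 2)) (hT₀ : t₀ ≤ T)
    (hη : IsTrajectory2 T (switchControl t₀) ξ0 η) :
    IsOptimalFinal2 T 1 ξ0 (switchControl t₀) η := by
  refine ⟨isAdmissible2_switchControl T t₀, hη, fun γ ζ hγ hζ => ?_⟩
  obtain ⟨h₁, h₂⟩ := hη.eq_of_ae_sum_eq (isTrajectory2_switchTrajectory T ht₀ hmatch)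
    (isAdmissible2_switchControl T t₀) hT
    (Filter.Eventually.of_forall fun t _ => switchControl_add t₀ t) T ⟨hT, le_rfl⟩
  rw [migV2, h₁, h₂, ← migV2, migV2_switchTrajectory_of_le hT₀]
  refine sq_le_migV2 (by positivity) ?_
  simpa only [show -(1 / 2 * T) = -T / 2 by ring] using
    hζ.mul_exp_le_xbar2 hγ hT hbar T ⟨hT, le_rfl⟩

/-- Two agents, `M = 1`, `ξ⁰_1 > ξ⁰_2`, `ξ̄(0) > 0`, `t₀ = 2 ln(ξ⁰_1/ξ̄(0))`.  For an optimal
control: `T ≥ t₀ ↔ ξ_1(T) = ξ_2(T)`; if `T ≥ t₀` then full strength is used a.e. (so that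
`ξ̄(t) = ξ̄(0) e^{−t/2}`), and the control `(1,0)` on `[0,t₀)`, `(1/2,1/2)` on `[t₀,T]`
is optimal. -/
theorem two_agents_M_eq_one_final_cost
    (T : ℝ) (hT : 0 < T) (ξ0 : ℕ → ℝ) (hord : ξ0 2 < ξ0 1)
    (hbar : 0 < (ξ0 1 + ξ0 2) / 2)
    (t₀ : ℝ) (ht₀ : t₀ = 2 * Real.log (ξ0 1 / ((ξ0 1 + ξ0 2) / 2)))
    (α ξ : ℝ → ℕ → ℝ) (hopt : IsOptimalFinal2 T 1 ξ0 α ξ)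
    (β : ℝ → ℕ → ℝ)
    (hβ : ∀ t i, β t i =
      if i = 1 then (if t < t₀ then (1 : ℝ) else 1 / 2)
      else if i = 2 then (if t < t₀ then (0 : ℝ) else 1 / 2) else 0) :
    (t₀ ≤ T ↔ ξ T 1 = ξ T 2) ∧
    (t₀ ≤ T →
      (∀ᵐ t ∂volume, t ∈ Set.Icc (0 : ℝ) T → α t 1 + α t 2 = 1) ∧
      (∀ t ∈ Set.Icc (0 : ℝ) T, xbar2 ξ t = ((ξ0 1 + ξ0 2) / 2) * Real.exp (-t / 2)) ∧
      (∀ η, IsTrajectory2 T β ξ0 η → IsOptimalFinal2 T 1 ξ0 β η)) := by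
  obtain ⟨hα, hξ, hmin⟩ := hopt
  obtain rfl : β = switchControl t₀ := funext fun t => funext (hβ t)
  have hhalf (t : ℝ) : -(1 / 2 * t) = -t / 2 := by ring
  have ht₀_pos : 0 < t₀ := pos_of_eq_two_mul_log hbar (by linarith) ht₀
  have hmatch := mul_exp_neg_eq_of_eq_two_mul_log (by linarith) hbar ht₀
  have hV := hmin _ _ (isAdmissible2_switchControl T t₀)
    (isTrajectory2_switchTrajectory T ht₀_pos hmatch)
  have hlow := hξ.mul_exp_le_xbar2 hα hT.le hbar T ⟨hT.le, le_rfl⟩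
  rw [hhalf] at hlow
  have hlate : t₀ ≤ T → ξ T 1 = (ξ0 1 + ξ0 2) / 2 * exp (-T / 2) ∧
      ξ T 2 = (ξ0 1 + ξ0 2) / 2 * exp (-T / 2) := fun h =>
    eq_of_migV2_le (by positivity) hlow (migV2_switchTrajectory_of_le h ▸ hV)
  refine ⟨⟨fun h => (hlate h).1.trans (hlate h).2.symm, fun heq => ?_⟩, fun h => ?_⟩
  · by_contra! hlt
    have := lt_migV2_of_eq (by positivity) (mul_exp_neg_lt_of_lt hbar hmatch hlt)
      (hξ.mul_exp_le_fst hα hT.le hbar T ⟨hT.le, le_rfl⟩) heq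
    rw [migV2_switchTrajectory_of_lt hlt] at hV
    linarith
  have hsum := hξ.ae_sum_eq_of_xbar2_eq hα hT.le hbar
    (by rw [hhalf, xbar2, (hlate h).1, (hlate h).2]; ring)
  refine ⟨hsum, fun t ht => ?_, fun η hη =>
    isOptimalFinal2_switchControl hT.le hbar ht₀_pos hmatch h hη⟩
  rw [hξ.xbar2_eq_of_ae_sum_eq hα hT.le hsum t ht, hhalf]
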